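/- arXiv:2004.10331 — 4 statements merged into one kernel-verified Lean document; each statement's English description precedes it below -/
import Mathlib

section
/- Assume there exists θ̄ ∈ Θ such that û(x,θ̄) = u_p*(x) for every x ∈ W^c (so in particular θ̄ ∈ Ξ). Then for every λ ≥ 0 such that S_λ ⊆ Ξ, every θ* ∈ S_λ satisfies û(x,θ*) = u_p*(x) for every x ∈ W^c. That is, whenever the penalty is large enough that all global minimizers of the penalized problem satisfy the dissipation constraint, every global minimizer recovers the pointwise min-norm stabilizing controller on W^c. -/
open MeasureTheory
open scoped InnerProductSpace

/-! Every minimizer `θ*` lies in `Ξ`, so its penalty vanishes and `L_λ(θ*)` is the control energy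
`∫ ‖û(·, θ*)‖²`; likewise `L_λ(θ̄)` is the energy of `u_p*`. Minimality of `θ*` bounds the first
energy by the second, while feasibility of `û(x, θ*)` gives `‖u_p*(x)‖ ≤ ‖û(x, θ*)‖` pointwise.
A continuous function that is nonnegative with zero integral vanishes on the support `W^c` of `μ`,
so `û(x, θ*)` is also a control of minimal norm at `x`. The feasible controls at `x` form a
half-space, and in a strictly convex space such as `ℝᵐ` a convex set has at most one element of
minimal norm. -/

namespace MeasureTheory.Measure

variable {X : Type*} [TopologicalSpace X] [MeasurableSpace X] [HereditarilyLindelofSpace X]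
  {μ : Measure X}

theorem eqOn_support_of_ae_eq {Y : Type*} [TopologicalSpace Y] [T2Space Y] {f g : X → Y}
    (h : f =ᵐ[μ] g) (hf : ContinuousOn f μ.support) (hg : ContinuousOn g μ.support) :
    Set.EqOn f g μ.support := by
  intro x hx
  by_contra hne
  obtain ⟨U, hU, hxU, hUne⟩ := mem_nhdsWithin.mp <|
    ((hf x hx).prodMk_nhds (hg x hx)).eventually (isClosed_diagonal.isOpen_compl.eventually_mem hne)
  have hpos : 0 < μ U := (mem_support_iff_forall x).mp hx U (hU.mem_nhds hxU)
  rw [← measure_inter_conull measure_compl_support] at hpos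
  exact hpos.ne' (measure_mono_null hUne (ae_iff.mp h))

theorem eqOn_support_of_le_of_integral_le {f g : X → ℝ} (hf : ContinuousOn f μ.support)
    (hg : ContinuousOn g μ.support) (hfi : Integrable f μ) (hgi : Integrable g μ)
    (hfg : ∀ x ∈ μ.support, f x ≤ g x) (hint : ∫ x, g x ∂μ ≤ ∫ x, f x ∂μ) :
    Set.EqOn f g μ.support := by
  have hnonneg : 0 ≤ᵐ[μ] fun x => g x - f x :=
    Filter.mem_of_superset support_mem_ae fun x hx => sub_nonneg.2 (hfg x hx)
  have hzero : ∫ x, g x - f x ∂μ = 0 :=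
    le_antisymm (by rw [integral_sub hgi hfi]; linarith) (integral_nonneg_of_ae hnonneg)
  have hae : (fun x => g x - f x) =ᵐ[μ] 0 :=
    (integral_eq_zero_iff_of_nonneg_ae hnonneg (hgi.sub hfi)).mp hzero
  exact eqOn_support_of_ae_eq (hae.mono fun x hx => (sub_eq_zero.mp hx).symm) hf hg

end MeasureTheory.Measure

theorem Convex.eq_of_norm_le_of_isMinOn {E : Type*} [NormedAddCommGroup E] [NormedSpace ℝ E]
    [StrictConvexSpace ℝ E] {C : Set E} (hC : Convex ℝ C) {u v : E} (hu : u ∈ C) (hv : v ∈ C)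
    (hmin : IsMinOn (‖·‖) C v) (huv : ‖u‖ ≤ ‖v‖) : u = v := by
  have heq : ‖u‖ = ‖v‖ := le_antisymm huv (hmin hu)
  by_contra hne
  have hmid : (1 / 2 : ℝ) • (u + v) ∈ C := by
    simpa only [smul_add] using hC hu hv (by norm_num) (by norm_num) (by norm_num)
  exact ((norm_midpoint_lt_iff heq).mpr hne).not_ge (heq ▸ hmin hmid)

theorem convex_setOf_inner_add_apply_le {E F : Type*} [AddCommGroup E] [Module ℝ E]
    [NormedAddCommGroup F] [InnerProductSpace ℝ F] (a b : F) (A : E →ₗ[ℝ] F) (r : ℝ) :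
    Convex ℝ {u | ⟪a, b + A u⟫_ℝ ≤ r} := by
  simp only [inner_add_right, ← le_sub_iff_add_le']
  exact convex_halfSpace_le ((innerₛₗ ℝ a).comp A).isLinear _

theorem learned_min_norm_general {n m K : ℕ}
    (f_p : EuclideanSpace ℝ (Fin n) → EuclideanSpace ℝ (Fin n))
    (g_p : EuclideanSpace ℝ (Fin n) →
      (EuclideanSpace ℝ (Fin m) →L[ℝ] EuclideanSpace ℝ (Fin n)))
    (gradV : EuclideanSpace ℝ (Fin n) → EuclideanSpace ℝ (Fin n))
    (sig : EuclideanSpace ℝ (Fin n) → ℝ)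
    (Wc : Set (EuclideanSpace ℝ (Fin n)))
    (hWcpt : IsCompact Wc)
    (μ : Measure (EuclideanSpace ℝ (Fin n))) [IsProbabilityMeasure μ]
    (hsupp : ∀ x : EuclideanSpace ℝ (Fin n),
      x ∈ Wc ↔ ∀ U : Set (EuclideanSpace ℝ (Fin n)), IsOpen U → x ∈ U → 0 < μ U)
    (Θ : Set (EuclideanSpace ℝ (Fin K)))
    (uhat : EuclideanSpace ℝ (Fin n) → EuclideanSpace ℝ (Fin K) →
      EuclideanSpace ℝ (Fin m))
    (huhat : Continuous fun p : EuclideanSpace ℝ (Fin n) × EuclideanSpace ℝ (Fin K) =>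
      uhat p.1 p.2)
    (Δ : EuclideanSpace ℝ (Fin n) → EuclideanSpace ℝ (Fin K) → ℝ)
    (hΔ : ∀ x θ, Δ x θ = ⟪gradV x, f_p x + g_p x (uhat x θ)⟫_ℝ + sig x)
    (L : ℝ → EuclideanSpace ℝ (Fin K) → ℝ)
    (hL : ∀ lam θ, L lam θ = ∫ x in Wc, (‖uhat x θ‖ ^ 2 + lam * max 0 (Δ x θ)) ∂μ)
    (S : ℝ → Set (EuclideanSpace ℝ (Fin K)))
    (hS : ∀ lam, S lam = {θ ∈ Θ | ∀ θ' ∈ Θ, L lam θ ≤ L lam θ'})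
    (Ξ : Set (EuclideanSpace ℝ (Fin K)))
    (hΞ : Ξ = {θ ∈ Θ | ∀ x ∈ Wc, Δ x θ ≤ 0})
    -- the pointwise min-norm controller of the plant
    (upstar : EuclideanSpace ℝ (Fin n) → EuclideanSpace ℝ (Fin m))
    (hup_feas : ∀ x ∈ Wc, ⟪gradV x, f_p x + g_p x (upstar x)⟫_ℝ ≤ -sig x)
    (hup_min : ∀ x ∈ Wc, ∀ u : EuclideanSpace ℝ (Fin m),
      ⟪gradV x, f_p x + g_p x u⟫_ℝ ≤ -sig x → ‖upstar x‖ ≤ ‖u‖)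
    -- the min-norm controller is realizable by the learned controller
    (θbar : EuclideanSpace ℝ (Fin K)) (hθbar : θbar ∈ Θ)
    (hθbar_eq : ∀ x ∈ Wc, uhat x θbar = upstar x) :
    ∀ lam : ℝ, 0 ≤ lam → S lam ⊆ Ξ →
      ∀ θstar ∈ S lam, ∀ x ∈ Wc, uhat x θstar = upstar x := by
  intro lam _ hSΞ θstar hθstar x hx
  have hW : Wc = μ.support := Set.ext fun y => (hsupp y).trans <| by
    rw [Measure.support_eq_forall_isOpen]
    exact forall_congr' fun _ => forall_comm
  have hWc_ae : ∀ᵐ y ∂μ, y ∈ Wc := hW ▸ Measure.support_mem_ae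
  have hΔ_nonpos : ∀ θ ∈ Ξ, ∀ y ∈ Wc, Δ y θ ≤ 0 := fun θ hθ =>
    (hΞ ▸ hθ : θ ∈ {θ ∈ Θ | ∀ x ∈ Wc, Δ x θ ≤ 0}).2
  have hfeas : ∀ θ ∈ Ξ, ∀ y ∈ Wc, ⟪gradV y, f_p y + g_p y (uhat y θ)⟫_ℝ ≤ -sig y :=
    fun θ hθ y hy => by linarith [hΔ y θ, hΔ_nonpos θ hθ y hy]
  have hL_of_mem : ∀ θ ∈ Ξ, L lam θ = ∫ y, ‖uhat y θ‖ ^ 2 ∂μ := fun θ hθ => by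
    rw [hL, Measure.restrict_eq_self_of_ae_mem hWc_ae]
    refine integral_congr_ae (hWc_ae.mono fun y hy => ?_)
    simp only [max_eq_left (hΔ_nonpos θ hθ y hy), mul_zero, add_zero]
  have hθbarΞ : θbar ∈ Ξ := hΞ ▸ ⟨hθbar, fun y hy => by
    rw [hΔ, hθbar_eq y hy]; linarith [hup_feas y hy]⟩
  have hθstarΞ := hSΞ hθstar
  have hle := (hS lam ▸ hθstar : θstar ∈ {θ ∈ Θ | ∀ θ' ∈ Θ, L lam θ ≤ L lam θ'}).2 θbar hθbar
  rw [hL_of_mem _ hθstarΞ, hL_of_mem _ hθbarΞ] at hle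
  have hcont : ∀ θ, Continuous fun y => ‖uhat y θ‖ ^ 2 := fun θ =>
    (huhat.comp (continuous_id.prodMk continuous_const)).norm.pow 2
  have hint : ∀ θ, Integrable (fun y => ‖uhat y θ‖ ^ 2) μ := fun θ =>
    Measure.restrict_eq_self_of_ae_mem hWc_ae ▸ (hcont θ).continuousOn.integrableOn_compact hWcpt
  have hnorm_le : ∀ y ∈ μ.support, ‖uhat y θbar‖ ^ 2 ≤ ‖uhat y θstar‖ ^ 2 :=
    hW ▸ fun y hy => by
      rw [hθbar_eq y hy]
      gcongr
      exact hup_min y hy _ (hfeas θstar hθstarΞ y hy)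
  have hnorm_eq : ‖uhat x θbar‖ ^ 2 = ‖uhat x θstar‖ ^ 2 :=
    Measure.eqOn_support_of_le_of_integral_le (hcont θbar).continuousOn (hcont θstar).continuousOn
      (hint θbar) (hint θstar) hnorm_le hle (hW ▸ hx)
  rw [hθbar_eq x hx, pow_left_inj₀ (norm_nonneg _) (norm_nonneg _) two_ne_zero] at hnorm_eq
  exact (convex_setOf_inner_add_apply_le (gradV x) (f_p x) (g_p x).toLinearMap (-sig x)
    ).eq_of_norm_le_of_isMinOn (hfeas θstar hθstarΞ x hx) (hup_feas x hx)
    (isMinOn_iff.2 (hup_min x hx)) hnorm_eq.ge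

/-- Theorem 1 of the paper: if some parameter `θ̄ ∈ Θ` exactly reproduces the pointwise
min-norm controller `u_p*` on `W^c`, then for every `λ ≥ 0` for which all global minimizers
of `L_λ` over `Θ` satisfy the dissipation constraint (`S_λ ⊆ Ξ`), every global minimizer
`θ* ∈ S_λ` satisfies `û(x,θ*) = u_p*(x)` for all `x ∈ W^c`. -/
theorem learned_min_norm {n m K : ℕ}
    (f_p : EuclideanSpace ℝ (Fin n) → EuclideanSpace ℝ (Fin n))
    (g_p : EuclideanSpace ℝ (Fin n) →
      (EuclideanSpace ℝ (Fin m) →L[ℝ] EuclideanSpace ℝ (Fin n)))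
    (V : EuclideanSpace ℝ (Fin n) → ℝ)
    (gradV : EuclideanSpace ℝ (Fin n) → EuclideanSpace ℝ (Fin n))
    (sig : EuclideanSpace ℝ (Fin n) → ℝ)
    (hfp : Continuous f_p) (hgp : Continuous g_p) (hsig : Continuous sig)
    (hV : ∀ x, HasGradientAt V (gradV x) x) (hgradV : Continuous gradV)
    (c : ℝ) (hc : 0 < c)
    (Wc : Set (EuclideanSpace ℝ (Fin n))) (hWc : Wc = {x | V x ≤ c})
    (hWcpt : IsCompact Wc)
    (μ : Measure (EuclideanSpace ℝ (Fin n))) [IsProbabilityMeasure μ]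
    (hsupp : ∀ x : EuclideanSpace ℝ (Fin n),
      x ∈ Wc ↔ ∀ U : Set (EuclideanSpace ℝ (Fin n)), IsOpen U → x ∈ U → 0 < μ U)
    (Θ : Set (EuclideanSpace ℝ (Fin K)))
    (uhat : EuclideanSpace ℝ (Fin n) → EuclideanSpace ℝ (Fin K) →
      EuclideanSpace ℝ (Fin m))
    (huhat : Continuous fun p : EuclideanSpace ℝ (Fin n) × EuclideanSpace ℝ (Fin K) =>
      uhat p.1 p.2)
    (Δ : EuclideanSpace ℝ (Fin n) → EuclideanSpace ℝ (Fin K) → ℝ)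
    (hΔ : ∀ x θ, Δ x θ = ⟪gradV x, f_p x + g_p x (uhat x θ)⟫_ℝ + sig x)
    (L : ℝ → EuclideanSpace ℝ (Fin K) → ℝ)
    (hL : ∀ lam θ, L lam θ = ∫ x in Wc, (‖uhat x θ‖ ^ 2 + lam * max 0 (Δ x θ)) ∂μ)
    (S : ℝ → Set (EuclideanSpace ℝ (Fin K)))
    (hS : ∀ lam, S lam = {θ ∈ Θ | ∀ θ' ∈ Θ, L lam θ ≤ L lam θ'})
    (Ξ : Set (EuclideanSpace ℝ (Fin K)))
    (hΞ : Ξ = {θ ∈ Θ | ∀ x ∈ Wc, Δ x θ ≤ 0})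
    -- the pointwise min-norm controller of the plant
    (upstar : EuclideanSpace ℝ (Fin n) → EuclideanSpace ℝ (Fin m))
    (hup_cont : ContinuousOn upstar Wc)
    (hup_feas : ∀ x ∈ Wc, ⟪gradV x, f_p x + g_p x (upstar x)⟫_ℝ ≤ -sig x)
    (hup_min : ∀ x ∈ Wc, ∀ u : EuclideanSpace ℝ (Fin m),
      ⟪gradV x, f_p x + g_p x u⟫_ℝ ≤ -sig x → ‖upstar x‖ ≤ ‖u‖)
    -- the min-norm controller is realizable by the learned controller
    (θbar : EuclideanSpace ℝ (Fin K)) (hθbar : θbar ∈ Θ)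
    (hθbar_eq : ∀ x ∈ Wc, uhat x θbar = upstar x) :
    ∀ lam : ℝ, 0 ≤ lam → S lam ⊆ Ξ →
      ∀ θstar ∈ S lam, ∀ x ∈ Wc, uhat x θstar = upstar x :=
  learned_min_norm_general f_p g_p gradV sig Wc hWcpt μ hsupp Θ uhat huhat Δ hΔ L hL S hS Ξ hΞ
    upstar hup_feas hup_min θbar hθbar hθbar_eq
end

section
/- Suppose the learned controller is linear in its parameters, û(x,θ) = Σ_{k=1}^K θ_k u_k(x), where u_1, …, u_K : ℝⁿ → ℝᵐ are continuous and their restrictions to W^c are linearly independent in C(W^c, ℝᵐ). Then for every λ ≥ 0 the loss L_λ : ℝ^K → ℝ is strongly convex; that is, there exists α > 0 such that θ ↦ L_λ(θ) − (α/2)‖θ‖² is convex on ℝ^K. -/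
/-!
Write `L_λ = Q + λ R` with `Q θ = ∫ ‖û(x, θ)‖² dμ` and `R θ = ∫ max 0 (Δ(x, θ)) dμ`. As `Δ(x, ·)`
is affine, `R` is convex. `Q` is a quadratic form, positive definite because for `θ ≠ 0` the
continuous function `û(·, θ)` is nonzero somewhere on the support `W^c` of `μ`. Such a form is
convex, hence continuous in finite dimension, so `Q θ ≥ β ‖θ‖²` with `β > 0` its minimum on the
unit sphere; with the identity `Q (a • x + b • y) = a Q x + b Q y - a b Q (x - y)` for `a + b = 1`
this makes `Q`, and with it `L_λ`, `2β`-strongly convex.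
-/

open MeasureTheory Set
open scoped InnerProductSpace

def IsSegmentQuadratic {E : Type*} [AddCommGroup E] [Module ℝ E] (q : E → ℝ) : Prop :=
  ∀ (x y : E) (a b : ℝ), a + b = 1 →
    q (a • x + b • y) = a * q x + b * q y - a * b * q (x - y)

namespace IsSegmentQuadratic

section Module

variable {E : Type*} [AddCommGroup E] [Module ℝ E] {q : E → ℝ}

lemma map_zero (hq : IsSegmentQuadratic q) : q 0 = 0 := by
  have h := hq 0 0 (1 / 2) (1 / 2) (by norm_num)
  simp only [smul_zero, add_zero, sub_zero] at h
  linarith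

lemma map_smul (hq : IsSegmentQuadratic q) (t : ℝ) (x : E) : q (t • x) = t ^ 2 * q x := by
  have h := hq x 0 t (1 - t) (by ring)
  simp only [smul_zero, add_zero, sub_zero, hq.map_zero] at h
  rw [h]
  ring

lemma convexOn (hq : IsSegmentQuadratic q) (hnonneg : ∀ x, 0 ≤ q x) : ConvexOn ℝ univ q := by
  refine ⟨convex_univ, fun x _ y _ a b ha hb hab => ?_⟩
  rw [hq x y a b hab, smul_eq_mul, smul_eq_mul]
  linarith [mul_nonneg (mul_nonneg ha hb) (hnonneg (x - y))]

lemma integral {X : Type*} [MeasurableSpace X] {μ : Measure X} {q : X → E → ℝ}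
    (hq : ∀ ω, IsSegmentQuadratic (q ω)) (hint : ∀ x, Integrable (q · x) μ) :
    IsSegmentQuadratic fun x => ∫ ω, q ω x ∂μ := by
  intro x y a b hab
  have hx := (hint x).const_mul a
  have hy := (hint y).const_mul b
  have hxy : Integrable (fun ω => a * q ω x + b * q ω y) μ := hx.add hy
  simp_rw [hq _ x y a b hab]
  rw [integral_sub hxy ((hint _).const_mul _), integral_add hx hy, integral_const_mul,
    integral_const_mul, integral_const_mul]

end Module

section NormedSpace

variable {E : Type*} [NormedAddCommGroup E] [NormedSpace ℝ E] {q : E → ℝ}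

lemma strongConvexOn (hq : IsSegmentQuadratic q) {m : ℝ} (hm : ∀ x, m / 2 * ‖x‖ ^ 2 ≤ q x) :
    StrongConvexOn univ m q := by
  refine ⟨convex_univ, fun x _ y _ a b ha hb hab => ?_⟩
  rw [hq x y a b hab, smul_eq_mul, smul_eq_mul]
  linarith [mul_le_mul_of_nonneg_left (hm (x - y)) (mul_nonneg ha hb)]

lemma exists_pos_mul_norm_sq_le [FiniteDimensional ℝ E] (hq : IsSegmentQuadratic q)
    (hpos : ∀ x, x ≠ 0 → 0 < q x) : ∃ β > 0, ∀ x, β * ‖x‖ ^ 2 ≤ q x := by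
  rcases subsingleton_or_nontrivial E with hE | hE
  · exact ⟨1, one_pos, fun x => by simp [Subsingleton.elim x 0, hq.map_zero]⟩
  have hnonneg : ∀ x, 0 ≤ q x := fun x => by
    rcases eq_or_ne x 0 with rfl | hx
    · exact hq.map_zero.ge
    · exact (hpos x hx).le
  have hcont : ContinuousOn q (Metric.sphere 0 1) :=
    ((hq.convexOn hnonneg).continuousOn isOpen_univ).mono (subset_univ _)
  obtain ⟨w, hw, hmin⟩ := (isCompact_sphere (0 : E) 1).exists_isMinOn
    (NormedSpace.sphere_nonempty.mpr zero_le_one) hcont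
  have hw0 : w ≠ 0 := ne_zero_of_mem_unit_sphere ⟨w, hw⟩
  refine ⟨q w, hpos w hw0, fun x => ?_⟩
  rcases eq_or_ne x 0 with rfl | hx
  · simp [hq.map_zero]
  have hx' : ‖x‖⁻¹ • x ∈ Metric.sphere (0 : E) 1 := by
    simp [norm_smul, inv_mul_cancel₀ (norm_ne_zero_iff.mpr hx)]
  calc q w * ‖x‖ ^ 2 ≤ q (‖x‖⁻¹ • x) * ‖x‖ ^ 2 := by gcongr; exact hmin hx'
    _ = q x := by
      rw [hq.map_smul, inv_pow, mul_comm, ← mul_assoc, mul_inv_cancel₀ (by positivity), one_mul]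

lemma exists_strongConvexOn [FiniteDimensional ℝ E] (hq : IsSegmentQuadratic q)
    (hpos : ∀ x, x ≠ 0 → 0 < q x) : ∃ m > 0, StrongConvexOn univ m q := by
  obtain ⟨β, hβ, hle⟩ := hq.exists_pos_mul_norm_sq_le hpos
  exact ⟨2 * β, by positivity, hq.strongConvexOn fun x => by linarith [hle x]⟩

end NormedSpace

end IsSegmentQuadratic

lemma isSegmentQuadratic_norm_sq_comp {E F : Type*} [AddCommGroup E] [Module ℝ E]
    [NormedAddCommGroup F] [InnerProductSpace ℝ F] (A : E →ₗ[ℝ] F) :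
    IsSegmentQuadratic fun x => ‖A x‖ ^ 2 := by
  intro x y a b hab
  obtain rfl : b = 1 - a := by linarith
  simp only [map_add, map_smul, map_sub, ← real_inner_self_eq_norm_sq, inner_add_left,
    inner_add_right, inner_sub_left, inner_sub_right, real_inner_smul_left,
    real_inner_smul_right, real_inner_comm (A x) (A y)]
  ring

lemma integral_pos_of_mem_support {X : Type*} [TopologicalSpace X] [MeasurableSpace X]
    {μ : Measure X} {f : X → ℝ} (hf : Continuous f) (hf0 : 0 ≤ f) (hfi : Integrable f μ)
    {x₀ : X} (hx₀ : x₀ ∈ μ.support) (hfx₀ : f x₀ ≠ 0) : 0 < ∫ x, f x ∂μ := by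
  rw [integral_pos_iff_support_of_nonneg hf0 hfi]
  exact (μ.mem_support_iff_forall x₀).mp hx₀ _ (hf.isOpen_support.mem_nhds hfx₀)

lemma exists_strongConvexOn_integral_norm_sq {X E F : Type*} [TopologicalSpace X]
    [MeasurableSpace X] {μ : Measure X} [NormedAddCommGroup E] [NormedSpace ℝ E]
    [FiniteDimensional ℝ E] [NormedAddCommGroup F] [InnerProductSpace ℝ F]
    (A : X → E →ₗ[ℝ] F) (hcont : ∀ θ, Continuous fun x => A x θ)
    (hint : ∀ θ, Integrable (fun x => ‖A x θ‖ ^ 2) μ)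
    (hinj : ∀ θ, (∀ x ∈ μ.support, A x θ = 0) → θ = 0) :
    ∃ m > 0, StrongConvexOn univ m fun θ => ∫ x, ‖A x θ‖ ^ 2 ∂μ := by
  refine (IsSegmentQuadratic.integral (fun x => isSegmentQuadratic_norm_sq_comp (A x))
    hint).exists_strongConvexOn fun θ hθ => ?_
  obtain ⟨x₀, hx₀, hAx₀⟩ : ∃ x ∈ μ.support, A x θ ≠ 0 := by
    by_contra! h
    exact hθ (hinj θ h)
  exact integral_pos_of_mem_support ((hcont θ).norm.pow 2) (fun x => by positivity) (hint θ) hx₀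
    (by simpa using hAx₀)

lemma convexOn_integral {X E : Type*} [MeasurableSpace X] {μ : Measure X} [AddCommGroup E]
    [Module ℝ E] {s : Set E} {F : X → E → ℝ} (hs : Convex ℝ s)
    (hF : ∀ ω, ConvexOn ℝ s (F ω)) (hint : ∀ x ∈ s, Integrable (F · x) μ) :
    ConvexOn ℝ s fun x => ∫ ω, F ω x ∂μ := by
  refine ⟨hs, fun x hx y hy a b ha hb hab => ?_⟩
  calc ∫ ω, F ω (a • x + b • y) ∂μ ≤ ∫ ω, (a * F ω x + b * F ω y) ∂μ :=
        integral_mono (hint _ (hs hx hy ha hb hab))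
          (((hint x hx).const_mul a).add ((hint y hy).const_mul b))
          fun ω => (hF ω).2 hx hy ha hb hab
    _ = a • ∫ ω, F ω x ∂μ + b • ∫ ω, F ω y ∂μ := by
      rw [integral_add ((hint x hx).const_mul a) ((hint y hy).const_mul b), integral_const_mul,
        integral_const_mul, smul_eq_mul, smul_eq_mul]

lemma convexOn_max_zero_inner_add {E F : Type*} [AddCommGroup E] [Module ℝ E]
    [NormedAddCommGroup F] [InnerProductSpace ℝ F] (v c : F) (B : E →ₗ[ℝ] F) (d : ℝ) :
    ConvexOn ℝ univ fun θ => max 0 (⟪v, c + B θ⟫_ℝ + d) := by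
  have hlin : ConvexOn ℝ univ fun θ => (innerₛₗ ℝ v ∘ₗ B) θ + (⟪v, c⟫_ℝ + d) :=
    (LinearMap.convexOn _ convex_univ).add_const _
  refine (convexOn_const 0 convex_univ).sup (hlin.congr fun θ _ => ?_)
  simp only [LinearMap.comp_apply, innerₛₗ_apply_apply, inner_add_right]
  ring

theorem loss_strongly_convex_general {n m K : ℕ}
    (f_p : EuclideanSpace ℝ (Fin n) → EuclideanSpace ℝ (Fin n))
    (g_p : EuclideanSpace ℝ (Fin n) →
      (EuclideanSpace ℝ (Fin m) →L[ℝ] EuclideanSpace ℝ (Fin n)))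
    (gradV : EuclideanSpace ℝ (Fin n) → EuclideanSpace ℝ (Fin n))
    (sig : EuclideanSpace ℝ (Fin n) → ℝ)
    (hfp : Continuous f_p) (hgp : Continuous g_p) (hsig : Continuous sig)
    (hgradV : Continuous gradV)
    (Wc : Set (EuclideanSpace ℝ (Fin n)))
    (hWcpt : IsCompact Wc)
    (μ : Measure (EuclideanSpace ℝ (Fin n))) [IsProbabilityMeasure μ]
    (hsupp : ∀ x : EuclideanSpace ℝ (Fin n),
      x ∈ Wc ↔ ∀ U : Set (EuclideanSpace ℝ (Fin n)), IsOpen U → x ∈ U → 0 < μ U)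
    -- the learned controller is linear in its parameters
    (u : Fin K → EuclideanSpace ℝ (Fin n) → EuclideanSpace ℝ (Fin m))
    (hu : ∀ i, Continuous (u i))
    (hindep : ∀ θ : Fin K → ℝ, (∀ x ∈ Wc, ∑ i, θ i • u i x = 0) → θ = 0)
    (uhat : EuclideanSpace ℝ (Fin n) → EuclideanSpace ℝ (Fin K) →
      EuclideanSpace ℝ (Fin m))
    (huhat : ∀ x θ, uhat x θ = ∑ i, θ i • u i x)
    (Δ : EuclideanSpace ℝ (Fin n) → EuclideanSpace ℝ (Fin K) → ℝ)
    (hΔ : ∀ x θ, Δ x θ = ⟪gradV x, f_p x + g_p x (uhat x θ)⟫_ℝ + sig x)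
    (L : ℝ → EuclideanSpace ℝ (Fin K) → ℝ)
    (hL : ∀ lam θ, L lam θ = ∫ x in Wc, (‖uhat x θ‖ ^ 2 + lam * max 0 (Δ x θ)) ∂μ) :
    ∀ lam : ℝ, 0 ≤ lam → ∃ α : ℝ, 0 < α ∧
      ConvexOn ℝ Set.univ fun θ : EuclideanSpace ℝ (Fin K) =>
        L lam θ - α / 2 * ‖θ‖ ^ 2 := by
  intro lam hlam
  have hsupport : μ.support = Wc := Set.ext fun x => by
    rw [hsupp, Measure.support_eq_forall_isOpen, mem_ofPred_eq]
    exact forall_congr' fun _ => imp.swap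
  have hrestrict : μ.restrict Wc = μ :=
    Measure.restrict_eq_self_of_ae_mem (hsupport ▸ Measure.support_mem_ae)
  have hint : ∀ f : EuclideanSpace ℝ (Fin n) → ℝ, Continuous f → Integrable f μ :=
    fun f hf => hrestrict ▸ hf.continuousOn.integrableOn_compact hWcpt
  let A x : EuclideanSpace ℝ (Fin K) →ₗ[ℝ] EuclideanSpace ℝ (Fin m) :=
    Fintype.linearCombination ℝ (u · x) ∘ₗ (WithLp.linearEquiv 2 ℝ (Fin K → ℝ)).toLinearMap
  have hA x θ : uhat x θ = A x θ := by simp [A, huhat, Fintype.linearCombination_apply]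
  have hAcont θ : Continuous fun x => A x θ := by
    simp only [← hA, huhat]
    fun_prop
  have hQint θ : Integrable (fun x => ‖A x θ‖ ^ 2) μ := hint _ (by fun_prop)
  have hRint θ : Integrable (fun x => max 0 (Δ x θ)) μ := hint _ (by simp only [hΔ, hA]; fun_prop)
  obtain ⟨α, hα, hQ⟩ := exists_strongConvexOn_integral_norm_sq A hAcont hQint fun θ h =>
    WithLp.ofLp_injective 2 <| hindep θ.ofLp fun x hx => by
      rw [← huhat, hA, h x (hsupport ▸ hx)]
  have hR : ConvexOn ℝ univ fun θ => ∫ x, max 0 (Δ x θ) ∂μ := by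
    refine convexOn_integral convex_univ (fun x => ?_) fun θ _ => hRint θ
    simpa only [hΔ, hA, LinearMap.comp_apply, ContinuousLinearMap.coe_coe] using
      convexOn_max_zero_inner_add (gradV x) (f_p x) ((g_p x).toLinearMap ∘ₗ A x) (sig x)
  refine ⟨α, hα, ((strongConvexOn_iff_convex.mp hQ).add (hR.smul hlam)).congr fun θ _ => ?_⟩
  simp only [Pi.add_apply, hL, hrestrict, hA]
  rw [integral_add (hQint θ) ((hRint θ).const_mul lam), integral_const_mul, smul_eq_mul]
  ring

/-- Lemma 2 of the paper: if the learned controller is linear in its parameters,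
`û(x,θ) = Σ_k θ_k u_k(x)`, with `u_1, …, u_K` continuous and linearly independent on
`C(W^c, ℝᵐ)`, then for every `λ ≥ 0` the loss `L_λ` is strongly convex: there is `α > 0`
such that `θ ↦ L_λ(θ) − (α/2)‖θ‖²` is convex on `ℝ^K`. -/
theorem loss_strongly_convex {n m K : ℕ}
    (f_p : EuclideanSpace ℝ (Fin n) → EuclideanSpace ℝ (Fin n))
    (g_p : EuclideanSpace ℝ (Fin n) →
      (EuclideanSpace ℝ (Fin m) →L[ℝ] EuclideanSpace ℝ (Fin n)))
    (V : EuclideanSpace ℝ (Fin n) → ℝ)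
    (gradV : EuclideanSpace ℝ (Fin n) → EuclideanSpace ℝ (Fin n))
    (sig : EuclideanSpace ℝ (Fin n) → ℝ)
    (hfp : Continuous f_p) (hgp : Continuous g_p) (hsig : Continuous sig)
    (hV : ∀ x, HasGradientAt V (gradV x) x) (hgradV : Continuous gradV)
    (c : ℝ) (hc : 0 < c)
    (Wc : Set (EuclideanSpace ℝ (Fin n))) (hWc : Wc = {x | V x ≤ c})
    (hWcpt : IsCompact Wc)
    (μ : Measure (EuclideanSpace ℝ (Fin n))) [IsProbabilityMeasure μ]
    (hsupp : ∀ x : EuclideanSpace ℝ (Fin n),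
      x ∈ Wc ↔ ∀ U : Set (EuclideanSpace ℝ (Fin n)), IsOpen U → x ∈ U → 0 < μ U)
    -- the learned controller is linear in its parameters
    (u : Fin K → EuclideanSpace ℝ (Fin n) → EuclideanSpace ℝ (Fin m))
    (hu : ∀ i, Continuous (u i))
    (hindep : ∀ θ : Fin K → ℝ, (∀ x ∈ Wc, ∑ i, θ i • u i x = 0) → θ = 0)
    (uhat : EuclideanSpace ℝ (Fin n) → EuclideanSpace ℝ (Fin K) →
      EuclideanSpace ℝ (Fin m))
    (huhat : ∀ x θ, uhat x θ = ∑ i, θ i • u i x)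
    (Δ : EuclideanSpace ℝ (Fin n) → EuclideanSpace ℝ (Fin K) → ℝ)
    (hΔ : ∀ x θ, Δ x θ = ⟪gradV x, f_p x + g_p x (uhat x θ)⟫_ℝ + sig x)
    (L : ℝ → EuclideanSpace ℝ (Fin K) → ℝ)
    (hL : ∀ lam θ, L lam θ = ∫ x in Wc, (‖uhat x θ‖ ^ 2 + lam * max 0 (Δ x θ)) ∂μ) :
    ∀ lam : ℝ, 0 ≤ lam → ∃ α : ℝ, 0 < α ∧
      ConvexOn ℝ Set.univ fun θ : EuclideanSpace ℝ (Fin K) =>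
        L lam θ - α / 2 * ‖θ‖ ^ 2 :=
  loss_strongly_convex_general f_p g_p gradV sig hfp hgp hsig hgradV Wc hWcpt μ hsupp u hu hindep
    uhat huhat Δ hΔ L hL
end

section
/- Suppose the learned controller is linear in its parameters, û(x,θ) = Σ_{k=1}^K θ_k u_k(x), with u_1, …, u_K : ℝⁿ → ℝᵐ continuous and linearly independent in C(W^c, ℝᵐ), and suppose there exists θ* ∈ Θ with û(x,θ*) = u_p*(x) for all x ∈ W^c. Then for every fixed θ ∈ Θ with θ ≠ θ* there exists λ̄ ≥ 0 such that for all λ > λ̄, L_λ(θ) > L_λ(θ*). (If θ ∈ Ξ this holds for all λ ≥ 0 by strict minimality of the expected control effort at θ*; if θ ∉ Ξ the penalty term, which is strictly positive at θ and zero at θ*, dominates for large λ.) -/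
/-!
At `θ*` the penalty vanishes (the min-norm controller is feasible on `W^c`), so
`L_λ(θ) - L_λ(θ*) = (E(θ) - E(θ*)) + λ P(θ)` with `E` the control effort and `P(θ) ≥ 0` the
penalty. If `θ` is feasible on `W^c`, then `û(·, θ)` and `u_p*` are two feasible controllers that
differ somewhere on `W^c` by linear independence; feasible sets are half-spaces, hence convex, so in
the strictly convex space `ℝᵐ` the min-norm point is the unique one and `E(θ) > E(θ*)`. Otherwise
`P(θ) > 0`. In either case `E(θ) - E(θ*) + λ P(θ) > 0` for all large `λ`. Positivity of the
integrals comes from continuity, since every neighbourhood of a point of `W^c = supp μ` has positive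
measure.
-/

open MeasureTheory
open scoped InnerProductSpace

theorem exists_forall_gt_pos_add_mul {a b : ℝ} (hb : 0 ≤ b) (h : 0 < a ∨ 0 < b) :
    ∃ l, 0 ≤ l ∧ ∀ t > l, 0 < a + t * b := by
  refine ⟨max 0 (-a / b), le_max_left _ _, fun t ht => ?_⟩
  rcases h with ha | hb
  · nlinarith [le_of_max_le_left ht.le]
  · have := (div_lt_iff₀ hb).1 ((le_max_right _ _).trans_lt ht)
    linarith

theorem exists_sum_smul_ne_of_ne {ι X R M : Type*} [Fintype ι] [Ring R] [AddCommGroup M]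
    [Module R M] {u : ι → X → M} {s : Set X}
    (hindep : ∀ θ : ι → R, (∀ x ∈ s, ∑ i, θ i • u i x = 0) → θ = 0) {θ θ' : ι → R}
    (hne : θ ≠ θ') : ∃ x ∈ s, ∑ i, θ i • u i x ≠ ∑ i, θ' i • u i x := by
  by_contra! h
  refine sub_ne_zero.2 hne (hindep _ fun x hx => ?_)
  simp only [Pi.sub_apply, sub_smul, Finset.sum_sub_distrib, h x hx, sub_self]

theorem convex_setOf_inner_add_apply_add_nonpos {E F : Type*} [NormedAddCommGroup E]
    [InnerProductSpace ℝ E] [AddCommGroup F] [Module ℝ F] (a b : E) (T : F →ₗ[ℝ] E) (c : ℝ) :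
    Convex ℝ {v | ⟪a, b + T v⟫_ℝ + c ≤ 0} := by
  have h : {v | ⟪a, b + T v⟫_ℝ + c ≤ 0} = {v | (innerₛₗ ℝ a ∘ₗ T) v ≤ -c - ⟪a, b⟫_ℝ} := by
    ext v
    simp only [Set.mem_ofPred_eq, inner_add_right, LinearMap.comp_apply, innerₛₗ_apply_apply]
    constructor <;> intro <;> linarith
  exact h ▸ convex_halfSpace_le (LinearMap.isLinear _) _

theorem norm_lt_norm_of_forall_norm_le_of_ne {E : Type*} [NormedAddCommGroup E]
    [NormedSpace ℝ E] [StrictConvexSpace ℝ E] {C : Set E} (hC : Convex ℝ C) {w v : E}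
    (hw : w ∈ C) (hmin : ∀ y ∈ C, ‖w‖ ≤ ‖y‖) (hv : v ∈ C) (hne : v ≠ w) : ‖w‖ < ‖v‖ :=
  calc ‖w‖ ≤ ‖(1 / 2 : ℝ) • v + (1 / 2 : ℝ) • w‖ :=
        hmin _ (hC hv hw (by norm_num) (by norm_num) (by norm_num))
    _ < ‖v‖ := norm_combo_lt_of_ne le_rfl (hmin v hv) hne (by norm_num) (by norm_num)
        (by norm_num)

theorem eq_measureSupport_of_forall_mem_iff {X : Type*} [TopologicalSpace X]
    [MeasurableSpace X] {μ : Measure X} {s : Set X}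
    (h : ∀ x, x ∈ s ↔ ∀ U : Set X, IsOpen U → x ∈ U → 0 < μ U) : s = μ.support := by
  ext x
  rw [h, Measure.support_eq_forall_isOpen, Set.mem_ofPred_eq]
  exact forall_congr' fun _ => forall_comm

section MeasureSupport

variable {X : Type*} [TopologicalSpace X] [MeasurableSpace X] [OpensMeasurableSpace X]
  {μ : Measure X}

theorem ContinuousOn.integrableOn_measureSupport [IsFiniteMeasureOnCompacts μ] {E : Type*}
    [NormedAddCommGroup E] {f : X → E} (hμ : IsCompact μ.support)
    (hf : ContinuousOn f μ.support) : IntegrableOn f μ.support μ :=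
  hf.integrableOn_compact' hμ Measure.isClosed_support.measurableSet

variable [HereditarilyLindelofSpace X]

theorem setIntegral_measureSupport_pos {f : X → ℝ} (hf : IntegrableOn f μ.support μ)
    (hcont : ContinuousOn f μ.support) (hnn : ∀ x ∈ μ.support, 0 ≤ f x) {x₀ : X}
    (hx₀ : x₀ ∈ μ.support) (hpos : 0 < f x₀) : 0 < ∫ x in μ.support, f x ∂μ := by
  have hs : MeasurableSet μ.support := Measure.isClosed_support.measurableSet
  rw [setIntegral_pos_iff_support_of_nonneg_ae ((ae_restrict_iff' hs).2 (ae_of_all _ hnn)) hf]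
  obtain ⟨U, hU, hx₀U, hUf⟩ := mem_nhdsWithin.1 (hcont x₀ hx₀ (Ioi_mem_nhds hpos))
  calc 0 < μ U := (Measure.mem_support_iff_forall x₀).1 hx₀ U (hU.mem_nhds hx₀U)
    _ = μ (U ∩ μ.support) := (measure_inter_conull Measure.measure_compl_support).symm
    _ ≤ μ (Function.support f ∩ μ.support) := measure_mono fun x hx => ⟨(hUf hx).ne', hx.2⟩

theorem setIntegral_norm_sq_lt_of_forall_norm_le [IsFiniteMeasureOnCompacts μ] {E : Type*}
    [NormedAddCommGroup E] [NormedSpace ℝ E] [StrictConvexSpace ℝ E] (hμ : IsCompact μ.support)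
    {C : X → Set E} (hC : ∀ x ∈ μ.support, Convex ℝ (C x)) {v w : X → E}
    (hv : ContinuousOn v μ.support) (hw : ContinuousOn w μ.support)
    (hvC : ∀ x ∈ μ.support, v x ∈ C x) (hwC : ∀ x ∈ μ.support, w x ∈ C x)
    (hmin : ∀ x ∈ μ.support, ∀ y ∈ C x, ‖w x‖ ≤ ‖y‖) (hne : ∃ x ∈ μ.support, v x ≠ w x) :
    ∫ x in μ.support, ‖w x‖ ^ 2 ∂μ < ∫ x in μ.support, ‖v x‖ ^ 2 ∂μ := by
  have hv2 : ContinuousOn (fun x => ‖v x‖ ^ 2) μ.support := hv.norm.pow 2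
  have hw2 : ContinuousOn (fun x => ‖w x‖ ^ 2) μ.support := hw.norm.pow 2
  obtain ⟨x₀, hx₀, hne₀⟩ := hne
  rw [← sub_pos, ← integral_sub (hv2.integrableOn_measureSupport hμ)
    (hw2.integrableOn_measureSupport hμ)]
  refine setIntegral_measureSupport_pos ((hv2.sub hw2).integrableOn_measureSupport hμ)
    (hv2.sub hw2) (fun x hx => sub_nonneg.2 ?_) hx₀ (sub_pos.2 ?_)
  · gcongr
    exact hmin x hx _ (hvC x hx)
  · gcongr
    exact norm_lt_norm_of_forall_norm_le_of_ne (hC x₀ hx₀) (hwC x₀ hx₀) (hmin x₀ hx₀)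
      (hvC x₀ hx₀) hne₀

theorem exists_forall_gt_setIntegral_norm_sq_add_penalty_lt [IsFiniteMeasureOnCompacts μ]
    {E : Type*} [NormedAddCommGroup E] [NormedSpace ℝ E] [StrictConvexSpace ℝ E]
    (hμ : IsCompact μ.support) {Φ : X → E → ℝ} (hΦ : ∀ x ∈ μ.support, Convex ℝ {y | Φ x y ≤ 0})
    {v w : X → E} (hv : ContinuousOn v μ.support) (hw : ContinuousOn w μ.support)
    (hΦv : ContinuousOn (fun x => Φ x (v x)) μ.support)
    (hΦw : ∀ x ∈ μ.support, Φ x (w x) ≤ 0)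
    (hmin : ∀ x ∈ μ.support, ∀ y, Φ x y ≤ 0 → ‖w x‖ ≤ ‖y‖) (hne : ∃ x ∈ μ.support, v x ≠ w x) :
    ∃ l, 0 ≤ l ∧ ∀ lam > l, ∫ x in μ.support, (‖w x‖ ^ 2 + lam * max 0 (Φ x (w x))) ∂μ <
      ∫ x in μ.support, (‖v x‖ ^ 2 + lam * max 0 (Φ x (v x))) ∂μ := by
  have hs : MeasurableSet μ.support := Measure.isClosed_support.measurableSet
  have hpenalty : ContinuousOn (fun x => max 0 (Φ x (v x))) μ.support :=
    continuousOn_const.sup hΦv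
  have hgap : 0 < ∫ x in μ.support, ‖v x‖ ^ 2 ∂μ - ∫ x in μ.support, ‖w x‖ ^ 2 ∂μ
      ∨ 0 < ∫ x in μ.support, max 0 (Φ x (v x)) ∂μ := by
    by_cases hfeas : ∀ x ∈ μ.support, Φ x (v x) ≤ 0
    · exact .inl <| sub_pos.2 <| setIntegral_norm_sq_lt_of_forall_norm_le hμ hΦ hv hw hfeas hΦw
        hmin hne
    · obtain ⟨x₀, hx₀, hpos⟩ := not_forall₂.1 hfeas
      exact .inr <| setIntegral_measureSupport_pos (hpenalty.integrableOn_measureSupport hμ)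
        hpenalty (fun x _ => le_max_left _ _) hx₀ (lt_max_of_lt_right (not_le.1 hpos))
  obtain ⟨l, hl, hpos⟩ := exists_forall_gt_pos_add_mul
    (setIntegral_nonneg hs fun x _ => le_max_left 0 (Φ x (v x))) hgap
  refine ⟨l, hl, fun lam hlam => ?_⟩
  have hw_eq : ∫ x in μ.support, (‖w x‖ ^ 2 + lam * max 0 (Φ x (w x))) ∂μ
      = ∫ x in μ.support, ‖w x‖ ^ 2 ∂μ :=
    setIntegral_congr_fun hs fun x hx => by simp only [max_eq_left (hΦw x hx), mul_zero, add_zero]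
  have hv2 : ContinuousOn (fun x => ‖v x‖ ^ 2) μ.support := hv.norm.pow 2
  rw [hw_eq, integral_add (hv2.integrableOn_measureSupport hμ)
    ((hpenalty.integrableOn_measureSupport hμ).const_mul lam), integral_const_mul]
  linarith [hpos lam hlam]

end MeasureSupport

theorem loss_dominates_eventually_general {n m K : ℕ}
    (f_p : EuclideanSpace ℝ (Fin n) → EuclideanSpace ℝ (Fin n))
    (g_p : EuclideanSpace ℝ (Fin n) →
      (EuclideanSpace ℝ (Fin m) →L[ℝ] EuclideanSpace ℝ (Fin n)))
    (gradV : EuclideanSpace ℝ (Fin n) → EuclideanSpace ℝ (Fin n))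
    (sig : EuclideanSpace ℝ (Fin n) → ℝ)
    (hfp : Continuous f_p) (hgp : Continuous g_p) (hsig : Continuous sig)
    (hgradV : Continuous gradV)
    (Wc : Set (EuclideanSpace ℝ (Fin n)))
    (hWcpt : IsCompact Wc)
    (μ : Measure (EuclideanSpace ℝ (Fin n))) [IsProbabilityMeasure μ]
    (hsupp : ∀ x : EuclideanSpace ℝ (Fin n),
      x ∈ Wc ↔ ∀ U : Set (EuclideanSpace ℝ (Fin n)), IsOpen U → x ∈ U → 0 < μ U)
    (Θ : Set (EuclideanSpace ℝ (Fin K)))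
    -- the learned controller is linear in its parameters
    (u : Fin K → EuclideanSpace ℝ (Fin n) → EuclideanSpace ℝ (Fin m))
    (hu : ∀ i, Continuous (u i))
    (hindep : ∀ θ : Fin K → ℝ, (∀ x ∈ Wc, ∑ i, θ i • u i x = 0) → θ = 0)
    (uhat : EuclideanSpace ℝ (Fin n) → EuclideanSpace ℝ (Fin K) →
      EuclideanSpace ℝ (Fin m))
    (huhat : ∀ x θ, uhat x θ = ∑ i, θ i • u i x)
    (Δ : EuclideanSpace ℝ (Fin n) → EuclideanSpace ℝ (Fin K) → ℝ)
    (hΔ : ∀ x θ, Δ x θ = ⟪gradV x, f_p x + g_p x (uhat x θ)⟫_ℝ + sig x)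
    (L : ℝ → EuclideanSpace ℝ (Fin K) → ℝ)
    (hL : ∀ lam θ, L lam θ = ∫ x in Wc, (‖uhat x θ‖ ^ 2 + lam * max 0 (Δ x θ)) ∂μ)
    -- the pointwise min-norm controller of the plant
    (upstar : EuclideanSpace ℝ (Fin n) → EuclideanSpace ℝ (Fin m))
    (hup_feas : ∀ x ∈ Wc, ⟪gradV x, f_p x + g_p x (upstar x)⟫_ℝ ≤ -sig x)
    (hup_min : ∀ x ∈ Wc, ∀ v : EuclideanSpace ℝ (Fin m),
      ⟪gradV x, f_p x + g_p x v⟫_ℝ ≤ -sig x → ‖upstar x‖ ≤ ‖v‖)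
    -- the min-norm controller is realizable by the learned controller
    (θstar : EuclideanSpace ℝ (Fin K))
    (hθstar_eq : ∀ x ∈ Wc, uhat x θstar = upstar x) :
    ∀ θ ∈ Θ, θ ≠ θstar → ∃ lambar : ℝ, 0 ≤ lambar ∧
      ∀ lam > lambar, L lam θstar < L lam θ := by
  intro θ _ hne
  obtain rfl : Wc = μ.support := eq_measureSupport_of_forall_mem_iff hsupp
  have huhat_cont (ϑ) : Continuous (uhat · ϑ) := by
    simp only [huhat]
    fun_prop
  have hsep : ∃ x ∈ μ.support, uhat x θ ≠ uhat x θstar := by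
    obtain ⟨x, hx, hx_ne⟩ := exists_sum_smul_ne_of_ne hindep ((WithLp.ofLp_injective 2).ne hne)
    exact ⟨x, hx, by simpa only [huhat] using hx_ne⟩
  simp only [hL, hΔ]
  exact exists_forall_gt_setIntegral_norm_sq_add_penalty_lt hWcpt
    (Φ := fun x y => ⟪gradV x, f_p x + g_p x y⟫_ℝ + sig x)
    (fun x _ => convex_setOf_inner_add_apply_add_nonpos _ _ (g_p x).toLinearMap _)
    (huhat_cont θ).continuousOn (huhat_cont θstar).continuousOn
    ((hgradV.inner (hfp.add (hgp.clm_apply (huhat_cont θ)))).add hsig).continuousOn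
    (fun x hx => by rw [hθstar_eq x hx]; linarith [hup_feas x hx])
    (fun x hx y hy => hθstar_eq x hx ▸ hup_min x hx y (by linarith)) hsep

/-- Pointwise-in-`θ` content of Theorem 2 of the paper: with a linearly parameterized
controller whose basis is linearly independent on `C(W^c, ℝᵐ)`, if `θ*` realizes the
pointwise min-norm controller `u_p*` on `W^c`, then for every fixed `θ ∈ Θ` with `θ ≠ θ*`
there is `λ̄ ≥ 0` such that `L_λ(θ) > L_λ(θ*)` for all `λ > λ̄`. -/
theorem loss_dominates_eventually {n m K : ℕ}
    (f_p : EuclideanSpace ℝ (Fin n) → EuclideanSpace ℝ (Fin n))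
    (g_p : EuclideanSpace ℝ (Fin n) →
      (EuclideanSpace ℝ (Fin m) →L[ℝ] EuclideanSpace ℝ (Fin n)))
    (V : EuclideanSpace ℝ (Fin n) → ℝ)
    (gradV : EuclideanSpace ℝ (Fin n) → EuclideanSpace ℝ (Fin n))
    (sig : EuclideanSpace ℝ (Fin n) → ℝ)
    (hfp : Continuous f_p) (hgp : Continuous g_p) (hsig : Continuous sig)
    (hV : ∀ x, HasGradientAt V (gradV x) x) (hgradV : Continuous gradV)
    (c : ℝ) (hc : 0 < c)
    (Wc : Set (EuclideanSpace ℝ (Fin n))) (hWc : Wc = {x | V x ≤ c})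
    (hWcpt : IsCompact Wc)
    (μ : Measure (EuclideanSpace ℝ (Fin n))) [IsProbabilityMeasure μ]
    (hsupp : ∀ x : EuclideanSpace ℝ (Fin n),
      x ∈ Wc ↔ ∀ U : Set (EuclideanSpace ℝ (Fin n)), IsOpen U → x ∈ U → 0 < μ U)
    (Θ : Set (EuclideanSpace ℝ (Fin K)))
    -- the learned controller is linear in its parameters
    (u : Fin K → EuclideanSpace ℝ (Fin n) → EuclideanSpace ℝ (Fin m))
    (hu : ∀ i, Continuous (u i))
    (hindep : ∀ θ : Fin K → ℝ, (∀ x ∈ Wc, ∑ i, θ i • u i x = 0) → θ = 0)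
    (uhat : EuclideanSpace ℝ (Fin n) → EuclideanSpace ℝ (Fin K) →
      EuclideanSpace ℝ (Fin m))
    (huhat : ∀ x θ, uhat x θ = ∑ i, θ i • u i x)
    (Δ : EuclideanSpace ℝ (Fin n) → EuclideanSpace ℝ (Fin K) → ℝ)
    (hΔ : ∀ x θ, Δ x θ = ⟪gradV x, f_p x + g_p x (uhat x θ)⟫_ℝ + sig x)
    (L : ℝ → EuclideanSpace ℝ (Fin K) → ℝ)
    (hL : ∀ lam θ, L lam θ = ∫ x in Wc, (‖uhat x θ‖ ^ 2 + lam * max 0 (Δ x θ)) ∂μ)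
    (Ξ : Set (EuclideanSpace ℝ (Fin K)))
    (hΞ : Ξ = {θ ∈ Θ | ∀ x ∈ Wc, Δ x θ ≤ 0})
    -- the pointwise min-norm controller of the plant
    (upstar : EuclideanSpace ℝ (Fin n) → EuclideanSpace ℝ (Fin m))
    (hup_cont : ContinuousOn upstar Wc)
    (hup_feas : ∀ x ∈ Wc, ⟪gradV x, f_p x + g_p x (upstar x)⟫_ℝ ≤ -sig x)
    (hup_min : ∀ x ∈ Wc, ∀ v : EuclideanSpace ℝ (Fin m),
      ⟪gradV x, f_p x + g_p x v⟫_ℝ ≤ -sig x → ‖upstar x‖ ≤ ‖v‖)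
    -- the min-norm controller is realizable by the learned controller
    (θstar : EuclideanSpace ℝ (Fin K)) (hθstar : θstar ∈ Θ)
    (hθstar_eq : ∀ x ∈ Wc, uhat x θstar = upstar x) :
    ∀ θ ∈ Θ, θ ≠ θstar → ∃ lambar : ℝ, 0 ≤ lambar ∧
      ∀ lam > lambar, L lam θstar < L lam θ :=
  loss_dominates_eventually_general f_p g_p gradV sig hfp hgp hsig hgradV Wc hWcpt μ hsupp Θ u hu
    hindep uhat huhat Δ hΔ L hL upstar hup_feas hup_min θstar hθstar_eq
end

section
/- Let f : ℝⁿ → ℝⁿ, g : ℝⁿ → ℝ^{n×m}, let V : ℝⁿ → ℝ be differentiable, let σ : ℝⁿ → ℝ, and fix x ∈ ℝⁿ at which the CLF condition inf_{u ∈ ℝᵐ} ∇V(x)·(f(x) + g(x)u) ≤ −σ(x) holds. Set a(x) := ∇V(x)·f(x) + σ(x) and b(x) := (∇V(x)·g(x))ᵀ ∈ ℝᵐ, and define u*(x) := −(a(x)/‖b(x)‖₂²) b(x) if a(x) > 0, and u*(x) := 0 if a(x) ≤ 0. Then u*(x) satisfies the dissipation constraint ∇V(x)·(f(x) + g(x)u*(x))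 ≤ −σ(x). -/
open scoped InnerProductSpace

section MinNormControl

variable {E : Type*} [NormedAddCommGroup E] [InnerProductSpace ℝ E]

/-- The minimum-norm point of the half-space `{u | a + ⟪b, u⟫ ≤ 0}` (when it is nonempty). -/
noncomputable def minNormControl (a : ℝ) (b : E) : E :=
  if 0 < a then (-(a / ‖b‖ ^ 2)) • b else 0

theorem ne_zero_of_forall_add_inner_le {a : ℝ} {b : E} (ha : 0 < a)
    (h : ∀ ε > 0, ∃ u : E, a + ⟪b, u⟫_ℝ ≤ ε) : b ≠ 0 := by
  rintro rfl
  obtain ⟨u, hu⟩ := h (a / 2) (half_pos ha)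
  rw [inner_zero_left, add_zero] at hu
  linarith

theorem add_inner_minNormControl_nonpos {a : ℝ} {b : E}
    (h : ∀ ε > 0, ∃ u : E, a + ⟪b, u⟫_ℝ ≤ ε) : a + ⟪b, minNormControl a b⟫_ℝ ≤ 0 := by
  unfold minNormControl
  split_ifs with ha
  · have hb : ‖b‖ ^ 2 ≠ 0 := by
      simpa using ne_zero_of_forall_add_inner_le ha h
    rw [real_inner_smul_right, real_inner_self_eq_norm_sq, neg_mul, div_mul_cancel₀ a hb]
    simp
  · simpa using ha

end MinNormControl

theorem min_norm_feasible_general {n m : ℕ}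
    (f : EuclideanSpace ℝ (Fin n) → EuclideanSpace ℝ (Fin n))
    (g : EuclideanSpace ℝ (Fin n) →
      (EuclideanSpace ℝ (Fin m) →L[ℝ] EuclideanSpace ℝ (Fin n)))
    (gradV : EuclideanSpace ℝ (Fin n) → EuclideanSpace ℝ (Fin n))
    (sig : EuclideanSpace ℝ (Fin n) → ℝ)
    (x : EuclideanSpace ℝ (Fin n))
    -- the CLF condition `inf_u ∇V(x)·(f(x) + g(x)u) ≤ −σ(x)` at `x`
    (hCLF : ∀ ε : ℝ, 0 < ε →
      ∃ u : EuclideanSpace ℝ (Fin m), ⟪gradV x, f x + g x u⟫_ℝ ≤ -sig x + ε)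
    -- `b(x) = (∇V(x)·g(x))ᵀ ∈ ℝᵐ`, characterized by `⟨b(x), u⟩ = ∇V(x)·(g(x)u)`
    (bx : EuclideanSpace ℝ (Fin m))
    (hbx : ∀ u : EuclideanSpace ℝ (Fin m), ⟪bx, u⟫_ℝ = ⟪gradV x, g x u⟫_ℝ)
    -- `a(x) = ∇V(x)·f(x) + σ(x)`
    (ax : ℝ) (hax : ax = ⟪gradV x, f x⟫_ℝ + sig x)
    -- the closed-form min-norm control law
    (ustar : EuclideanSpace ℝ (Fin m))
    (hustar : ustar = if 0 < ax then (-(ax / ‖bx‖ ^ 2)) • bx else 0) :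
    ⟪gradV x, f x + g x ustar⟫_ℝ ≤ -sig x := by
  have hsplit : ∀ u, ⟪gradV x, f x + g x u⟫_ℝ + sig x = ax + ⟪bx, u⟫_ℝ := fun u => by
    rw [inner_add_right, hbx, hax]
    ring
  have hCLF' : ∀ ε > 0, ∃ u, ax + ⟪bx, u⟫_ℝ ≤ ε := fun ε hε => by
    obtain ⟨u, hu⟩ := hCLF ε hε
    exact ⟨u, by linarith [hsplit u]⟩
  rw [show ustar = minNormControl ax bx from hustar]
  linarith [hsplit (minNormControl ax bx), add_inner_minNormControl_nonpos hCLF']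

/-- Feasibility of the closed-form min-norm control law: at a point `x` where the CLF
condition holds, with `a(x) = ∇V(x)·f(x) + σ(x)` and `b(x) = (∇V(x)·g(x))ᵀ`, the control
`u*(x) = −(a(x)/‖b(x)‖²) b(x)` if `a(x) > 0` and `u*(x) = 0` otherwise satisfies the
dissipation constraint `∇V(x)·(f(x) + g(x)u*(x)) ≤ −σ(x)`. -/
theorem min_norm_feasible {n m : ℕ}
    (f : EuclideanSpace ℝ (Fin n) → EuclideanSpace ℝ (Fin n))
    (g : EuclideanSpace ℝ (Fin n) →
      (EuclideanSpace ℝ (Fin m) →L[ℝ] EuclideanSpace ℝ (Fin n)))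
    (V : EuclideanSpace ℝ (Fin n) → ℝ)
    (gradV : EuclideanSpace ℝ (Fin n) → EuclideanSpace ℝ (Fin n))
    (sig : EuclideanSpace ℝ (Fin n) → ℝ)
    (x : EuclideanSpace ℝ (Fin n))
    (hV : HasGradientAt V (gradV x) x)
    -- the CLF condition `inf_u ∇V(x)·(f(x) + g(x)u) ≤ −σ(x)` at `x`
    (hCLF : ∀ ε : ℝ, 0 < ε →
      ∃ u : EuclideanSpace ℝ (Fin m), ⟪gradV x, f x + g x u⟫_ℝ ≤ -sig x + ε)
    -- `b(x) = (∇V(x)·g(x))ᵀ ∈ ℝᵐ`, characterized by `⟨b(x), u⟩ = ∇V(x)·(g(x)u)`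
    (bx : EuclideanSpace ℝ (Fin m))
    (hbx : ∀ u : EuclideanSpace ℝ (Fin m), ⟪bx, u⟫_ℝ = ⟪gradV x, g x u⟫_ℝ)
    -- `a(x) = ∇V(x)·f(x) + σ(x)`
    (ax : ℝ) (hax : ax = ⟪gradV x, f x⟫_ℝ + sig x)
    -- the closed-form min-norm control law
    (ustar : EuclideanSpace ℝ (Fin m))
    (hustar : ustar = if 0 < ax then (-(ax / ‖bx‖ ^ 2)) • bx else 0) :
    ⟪gradV x, f x + g x ustar⟫_ℝ ≤ -sig x :=
  min_norm_feasible_general f g gradV sig x hCLF bx hbx ax hax ustar hustar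
end
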